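/- Under the stated context with −c ≢ 1 (mod 4), write δ = r + s√−c with r, s rational integers. Then s divides d, the polynomial f_s(X) = ((X + s√−c)ᵖ − (X − s√−c)ᵖ)/(2s√−c) − d·C₁^{(p−1)/2}/s has rational integer coefficients, and f_s(r) = 0; in other words, r is an integer root of the explicit polynomial f_s ∈ ℤ[X]. -/

import Mathlib

/-! Write `ω = √-c` and `m = (p - 1) / 2`. The hypothesis lifts to `ℤ[ω]` as
`(r + sω) ^ p = C₁ ^ m (C₁ x + d ω)`. Comparing `ω`-parts gives `s ∣ C₁ ^ m d`; taking norms gives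
`r² + c s² = C₁ y`, so a prime dividing `s` and `C₁` would divide `r`, then `y` (as `C₁` is
squarefree) and finally `C₂`; hence `s ∣ d`. Subtracting the conjugate identity,
`((r + sω) ^ p - (r - sω) ^ p) / (2sω) = C₁ ^ m d / s`, i.e. `f_s(r) = 0`, and `f_s` has integer
coefficients because only odd powers of `sω` survive in the binomial expansion. -/

open Polynomial IntermediateField

noncomputable def sqrtneg (c : ℕ) : ℂ := Complex.I * Real.sqrt c

lemma sqrtneg_sq (c : ℕ) : sqrtneg c ^ 2 = -(c : ℂ) := by
  have h : ((Real.sqrt c : ℝ) : ℂ) ^ 2 = (c : ℂ) := by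
    rw [← Complex.ofReal_pow, Real.sq_sqrt (by positivity)]
    norm_num
  simp [sqrtneg, mul_pow, Complex.I_sq, h]

lemma sqrtneg_isIntegral (c : ℕ) : IsIntegral ℚ (sqrtneg c) := by
  refine ⟨X ^ 2 + C (c : ℚ), monic_X_pow_add_C _ two_ne_zero, ?_⟩
  simp [eval₂_add, eval₂_pow, sqrtneg_sq c]

/-- The field `K = ℚ(√-c)`, realised as the subfield of `ℂ` generated by `i·√c`. -/
noncomputable def Kf (c : ℕ) : IntermediateField ℚ ℂ := ℚ⟮sqrtneg c⟯

/-- The class number of `ℚ(√-c)`. -/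
noncomputable def classNumberK (c : ℕ) : ℕ :=
  haveI : FiniteDimensional ℚ (Kf c) :=
    IntermediateField.adjoin.finiteDimensional (sqrtneg_isIntegral c)
  haveI : NumberField (Kf c) := ⟨⟩
  NumberField.classNumber (Kf c)

lemma sqrtneg_mul_self (c : ℕ) : sqrtneg c * sqrtneg c = ((-(c : ℤ) : ℤ) : ℂ) := by
  push_cast
  rw [← sq, sqrtneg_sq]

lemma sqrtneg_ne_zero {c : ℕ} (hc : 0 < c) : sqrtneg c ≠ 0 := by
  intro h
  have := sqrtneg_sq c
  rw [h] at this
  norm_num at this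
  omega

lemma conj_sqrtneg (c : ℕ) : starRingEnd ℂ (sqrtneg c) = -sqrtneg c := by
  simp [sqrtneg, Complex.conj_ofReal]

noncomputable def sqrtnegLift (c : ℕ) : ℤ√(-(c : ℤ)) →+* ℂ :=
  Zsqrtd.lift ⟨sqrtneg c, sqrtneg_mul_self c⟩

lemma sqrtnegLift_apply (c : ℕ) (z : ℤ√(-(c : ℤ))) :
    sqrtnegLift c z = z.re + z.im * sqrtneg c :=
  Zsqrtd.lift_apply_apply _ _

lemma sqrtnegLift_injective {c : ℕ} (hc : 0 < c) : Function.Injective (sqrtnegLift c) :=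
  Zsqrtd.lift_injective _ fun n h => by nlinarith [mul_self_nonneg n]

lemma Zsqrtd.im_dvd_im_pow {D : ℤ} (z : ℤ√D) (n : ℕ) : z.im ∣ (z ^ n).im := by
  induction n with
  | zero => simp
  | succ n ih =>
    rw [pow_succ, Zsqrtd.im_mul]
    exact dvd_add (dvd_mul_left _ _) (ih.mul_right _)

lemma Zsqrtd.norm_pow {D : ℤ} (z : ℤ√D) (n : ℕ) : (z ^ n).norm = z.norm ^ n :=
  map_pow Zsqrtd.normMonoidHom z n

lemma isCoprime_of_sq_add_mul_sq_eq_mul {C₁ C₂ c r s x y : ℤ} {p : ℕ} (hp : p ≠ 0)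
    (hC₁ : Squarefree C₁) (hcop : IsCoprime C₁ C₂)
    (hnorm : r ^ 2 + c * s ^ 2 = C₁ * y) (heq : C₁ * x ^ 2 + C₂ = y ^ p) :
    IsCoprime s C₁ := by
  refine isCoprime_of_prime_dvd (fun h => hC₁.ne_zero h.2) fun q hq hqs hqC₁ => ?_
  have hqs2 : q ∣ c * s ^ 2 := (dvd_pow hqs two_ne_zero).mul_left c
  have hqr : q ∣ r := hq.dvd_of_dvd_pow (n := 2) <| by
    rw [eq_sub_of_add_eq hnorm]
    exact dvd_sub (hqC₁.mul_right y) hqs2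
  have hqy : q ∣ y := hC₁.dvd_of_squarefree_of_mul_dvd_mul_right <| by
    rw [← hnorm, ← sq]
    exact dvd_add (pow_dvd_pow_of_dvd hqr 2) ((pow_dvd_pow_of_dvd hqs 2).mul_left c)
  have hqC₂ : q ∣ C₂ := by
    rw [eq_sub_of_add_eq' heq]
    exact dvd_sub (dvd_pow hqy hp) (hqC₁.mul_right _)
  exact hq.not_isUnit (hcop.isUnit_of_dvd' hqC₁ hqC₂)

/-- `binomOddPoly p e` is `((X + a) ^ p - (X - a) ^ p) / (2 * a)` for any `a` with `a ^ 2 = e`. -/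
noncomputable def binomOddPoly (p : ℕ) (e : ℤ) : ℤ[X] :=
  ∑ k ∈ Finset.range (p + 1),
    C (if Odd (p - k) then (p.choose k : ℤ) * e ^ ((p - k) / 2) else 0) * X ^ k

lemma C_two_mul_map_binomOddPoly {R : Type*} [CommRing R] (p : ℕ) {e : ℤ} {a : R}
    (ha : a ^ 2 = e) :
    C (2 * a) * (binomOddPoly p e).map (Int.castRingHom R) = (X + C a) ^ p - (X - C a) ^ p := by
  rw [sub_eq_add_neg X, ← C_neg, add_pow, add_pow, ← Finset.sum_sub_distrib, binomOddPoly,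
    Polynomial.map_sum, Finset.mul_sum]
  refine Finset.sum_congr rfl fun k _ => ?_
  rcases Nat.even_or_odd (p - k) with hk | ⟨j, hj⟩
  · simp [Nat.not_odd_iff_even.2 hk, hk.neg_pow]
  · have hj2 : (p - k) / 2 = j := by omega
    rw [if_pos ⟨j, hj⟩, hj2, hj, C_neg, Odd.neg_pow ⟨j, rfl⟩]
    simp only [Polynomial.map_mul, map_C, Polynomial.map_pow, map_X, Int.coe_castRingHom,
      Polynomial.map_natCast, ← ha, C_mul, C_pow, map_ofNat C, map_natCast C]
    ring

lemma exists_map_eq_and_eval_eq_zero {K : Type*} [Field K] [CharZero K] (p : ℕ) {e : ℤ} {a : K}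
    (ha : a ^ 2 = e) (ha0 : a ≠ 0) {r n : ℤ} (hr : (r + a) ^ p - (r - a) ^ p = 2 * a * n) :
    ∃ g : ℤ[X], g.map (Int.castRingHom K) =
      C (2 * a)⁻¹ * ((X + C a) ^ p - (X - C a) ^ p) - C (n : K) ∧ g.eval r = 0 := by
  have h2a : (2 * a : K) ≠ 0 := mul_ne_zero two_ne_zero ha0
  have hmap := C_two_mul_map_binomOddPoly p ha
  have heval : (binomOddPoly p e).eval r = n := by
    have h := congrArg (eval (r : K)) hmap
    simp only [eval_mul, eval_C, eval_sub, eval_add, eval_pow, eval_X, eval_intCast_map,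
      Int.coe_castRingHom, hr] at h
    exact_mod_cast mul_left_cancel₀ h2a h
  refine ⟨binomOddPoly p e - C n, ?_, by rw [eval_sub, eval_C, heval, sub_self]⟩
  rw [Polynomial.map_sub, map_C, ← hmap, ← mul_assoc, ← C_mul, inv_mul_cancel₀ h2a, C_1, one_mul]
  rfl

lemma sq_add_mul_sq_eq_of_pow_eq {C₁ C₂ c d x y r s : ℤ} {m : ℕ}
    (hfact : C₁ * C₂ = c * d ^ 2) (heq : C₁ * x ^ 2 + C₂ = y ^ (2 * m + 1))
    (hz : (⟨r, s⟩ : ℤ√(-c)) ^ (2 * m + 1) = ⟨C₁ ^ (m + 1) * x, C₁ ^ m * d⟩) :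
    r ^ 2 + c * s ^ 2 = C₁ * y := by
  have hnorm := congrArg Zsqrtd.norm hz
  rw [Zsqrtd.norm_pow, Zsqrtd.norm_def, Zsqrtd.norm_def] at hnorm
  rw [← (odd_two_mul_add_one m).pow_inj]
  linear_combination hnorm - C₁ ^ (2 * m) * hfact + C₁ ^ (2 * m + 1) * heq

lemma add_pow_sub_sub_pow_of_add_pow_eq {c n : ℕ} {r s A B : ℤ}
    (h : ((r : ℂ) + s * sqrtneg c) ^ n = A + B * sqrtneg c) :
    ((r : ℂ) + s * sqrtneg c) ^ n - (r - s * sqrtneg c) ^ n = 2 * B * sqrtneg c := by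
  have hconj : ((r : ℂ) - s * sqrtneg c) ^ n = A - B * sqrtneg c := by
    simpa [conj_sqrtneg, ← sub_eq_add_neg] using congrArg (starRingEnd ℂ) h
  rw [h, hconj]
  ring

theorem stmt15_general (C₁ C₂ c d : ℕ) (hC₁sqf : Squarefree C₁)
    (hcop : Nat.gcd C₁ C₂ = 1)
    (hcpos : 0 < c) (hdpos : 0 < d)
    (hfact : C₁ * C₂ = c * d ^ 2)
    (p : ℕ) (hpodd : Odd p)
    (x y : ℕ)
    (heq : C₁ * x ^ 2 + C₂ = y ^ p)
    (δ : ℂ)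
    (hδeq : (C₁ : ℂ) ^ ((p - 1) / 2) * ((C₁ : ℂ) * (x : ℂ) + (d : ℂ) * sqrtneg c) = δ ^ p)
    (r s : ℤ) (hδrs : δ = (r : ℂ) + (s : ℂ) * sqrtneg c) :
    s ∣ (d : ℤ) ∧
    ∃ g : Polynomial ℤ,
      g.map (Int.castRingHom ℂ) =
        C (2 * (s : ℂ) * sqrtneg c)⁻¹ *
            ((X + C ((s : ℂ) * sqrtneg c)) ^ p - (X - C ((s : ℂ) * sqrtneg c)) ^ p) -
          C ((d : ℂ) * (C₁ : ℂ) ^ ((p - 1) / 2) / (s : ℂ)) ∧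
      g.eval r = 0 := by
  obtain ⟨m, rfl⟩ := hpodd
  rw [show (2 * m + 1 - 1) / 2 = m by omega] at hδeq ⊢
  subst hδrs
  have hlift : ((r : ℂ) + s * sqrtneg c) ^ (2 * m + 1) =
      ((C₁ ^ (m + 1) * x : ℤ) : ℂ) + ((C₁ ^ m * d : ℤ) : ℂ) * sqrtneg c := by
    rw [← hδeq]
    push_cast
    ring
  have hz : (⟨r, s⟩ : ℤ√(-(c : ℤ))) ^ (2 * m + 1) = ⟨C₁ ^ (m + 1) * x, C₁ ^ m * d⟩ :=
    sqrtnegLift_injective hcpos (by rw [map_pow, sqrtnegLift_apply, sqrtnegLift_apply, hlift])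
  have heqℤ : (C₁ * x ^ 2 + C₂ : ℤ) = y ^ (2 * m + 1) := by exact_mod_cast heq
  have hnorm := sq_add_mul_sq_eq_of_pow_eq (by exact_mod_cast hfact) heqℤ hz
  obtain ⟨u, hu⟩ : s ∣ (d : ℤ) :=
    (isCoprime_of_sq_add_mul_sq_eq_mul (odd_two_mul_add_one m).pos.ne'
      (Int.squarefree_natCast.2 hC₁sqf) (Nat.isCoprime_iff_coprime.2 hcop) hnorm
      heqℤ).pow_right.dvd_of_dvd_mul_left (hz ▸ Zsqrtd.im_dvd_im_pow _ _)
  have hdu : (d : ℂ) = s * u := by exact_mod_cast hu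
  have hs0 : (s : ℂ) ≠ 0 := by
    rintro h
    rw [h, zero_mul, Nat.cast_eq_zero] at hdu
    omega
  obtain ⟨g, hg, hgr⟩ := exists_map_eq_and_eval_eq_zero _ (e := -c * s ^ 2) (n := u * C₁ ^ m)
    (by push_cast; rw [mul_pow, sqrtneg_sq]; ring) (mul_ne_zero hs0 (sqrtneg_ne_zero hcpos))
    ((add_pow_sub_sub_pow_of_add_pow_eq hlift).trans (by push_cast; rw [hdu]; ring))
  refine ⟨⟨u, hu⟩, g, ?_, hgr⟩
  rw [hg, mul_assoc]
  congr 3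
  push_cast
  rw [hdu]
  field_simp

theorem stmt15 (C₁ C₂ c d : ℕ) (hC₁pos : 0 < C₁) (hC₁sqf : Squarefree C₁)
    (hC₂pos : 0 < C₂) (hcop : Nat.gcd C₁ C₂ = 1) (hmod8 : C₁ * C₂ % 8 ≠ 7)
    (hcpos : 0 < c) (hdpos : 0 < d) (hcsqf : Squarefree c)
    (hfact : C₁ * C₂ = c * d ^ 2)
    (p : ℕ) (hp : p.Prime) (hpodd : Odd p)
    (hpcl : ¬ p ∣ classNumberK c)
    (hp3 : p = 3 → ¬ ∃ m : ℤ, (C₁ : ℤ) * (C₂ : ℤ) = 3 * m ^ 2)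
    (x y : ℕ) (hxpos : 0 < x) (hypos : 0 < y)
    (heq : C₁ * x ^ 2 + C₂ = y ^ p)
    (hgcd : Nat.gcd (Nat.gcd (C₁ * x ^ 2) C₂) (y ^ p) = 1)
    (δ : ℂ) (hδK : δ ∈ Kf c) (hδint : IsIntegral ℤ δ)
    (hδeq : (C₁ : ℂ) ^ ((p - 1) / 2) * ((C₁ : ℂ) * (x : ℂ) + (d : ℂ) * sqrtneg c) = δ ^ p)
    (hc4 : ¬ (-(c : ℤ) ≡ 1 [ZMOD 4]))
    (r s : ℤ) (hδrs : δ = (r : ℂ) + (s : ℂ) * sqrtneg c) :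
    s ∣ (d : ℤ) ∧
    ∃ g : Polynomial ℤ,
      g.map (Int.castRingHom ℂ) =
        C (2 * (s : ℂ) * sqrtneg c)⁻¹ *
            ((X + C ((s : ℂ) * sqrtneg c)) ^ p - (X - C ((s : ℂ) * sqrtneg c)) ^ p) -
          C ((d : ℂ) * (C₁ : ℂ) ^ ((p - 1) / 2) / (s : ℂ)) ∧
      g.eval r = 0 :=
  stmt15_general C₁ C₂ c d hC₁sqf hcop hcpos hdpos hfact p hpodd x y heq δ hδeq r s hδrs
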